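/- arXiv:2312.16928 — 5 statements merged into one kernel-verified Lean document; each statement's English description precedes it below -/
import Mathlib

section
/- Let ω ∈ C^1([0, η]) be nonnegative nonincreasing, and v ∈ L^1(ℝ) ∩ L^∞(ℝ) continuous. With V(x) = ∫_x^{x+η} ω(y - x) v(y) dy, the derivative V' satisfies ∫_ℝ |V'(x)| dx ≤ 3 ‖v‖_{L^1} ‖ω‖_{L^∞}; hence V has bounded variation. -/
/-!
Since `ω` is nonincreasing, `ω' ≤ 0` on `[0, η]`, so `∫₀^η |ω'| = ω 0 - ω η ≤ ‖ω‖_∞`.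
After the substitution `z = x + t`, the integral term of `V'` is dominated by
`∫₀^η |v (x + t)| |ω' t| dt`, whose integral over `x` is `‖v‖₁ ∫₀^η |ω'|` by Fubini and
translation invariance of Lebesgue measure; each boundary term contributes at most
`‖v‖₁ ‖ω‖_∞`.
-/

open MeasureTheory Set

section TranslatedProduct

variable {G : Type*} [MeasurableSpace G] [AddGroup G] [MeasurableAdd₂ G]
  {μ : Measure G} [SFinite μ] [μ.IsAddRightInvariant] {ν : Measure G} [SFinite ν] {f g : G → ℝ}

theorem integrable_prod_comp_add_mul (hfm : Measurable f) (hf : Integrable f μ)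
    (hg : Integrable g ν) :
    Integrable (fun p : G × G => f (p.1 + p.2) * g p.2) (μ.prod ν) := by
  have hmeas : AEStronglyMeasurable (fun p : G × G => f (p.1 + p.2) * g p.2) (μ.prod ν) :=
    (hfm.comp measurable_add).aestronglyMeasurable.mul hg.aestronglyMeasurable.comp_snd
  refine (integrable_prod_iff' hmeas).2
    ⟨.of_forall fun t => (hf.comp_add_right t).mul_const (g t), ?_⟩
  refine (hg.norm.const_mul (∫ x, ‖f x‖ ∂μ)).congr (.of_forall fun t => ?_)
  simp only [norm_mul, integral_mul_const, integral_add_right_eq_self (fun x => ‖f x‖)]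

theorem integral_integral_comp_add_mul (hfm : Measurable f) (hf : Integrable f μ)
    (hg : Integrable g ν) :
    ∫ x, ∫ t, f (x + t) * g t ∂ν ∂μ = (∫ x, f x ∂μ) * ∫ t, g t ∂ν := by
  rw [integral_integral_swap (integrable_prod_comp_add_mul hfm hf hg)]
  simp only [integral_mul_const, integral_add_right_eq_self f, integral_const_mul]

end TranslatedProduct

theorem AntitoneOn.integral_Ioc_abs_deriv {ω ω' : ℝ → ℝ} {a b : ℝ} (hab : a < b)
    (hmono : AntitoneOn ω (Icc a b)) (hderiv : ∀ t ∈ Icc a b, HasDerivAt ω (ω' t) t)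
    (hcont : ContinuousOn ω' (Icc a b)) :
    ∫ t in Ioc a b, |ω' t| = ω a - ω b := by
  have hnonpos : ∀ t ∈ Icc a b, ω' t ≤ 0 := fun t ht =>
    (hderiv t ht).hasDerivWithinAt.derivWithin (uniqueDiffOn_Icc hab t ht) ▸
      hmono.derivWithin_nonpos
  rw [← uIcc_of_le hab.le] at hderiv hcont hnonpos
  rw [← intervalIntegral.integral_of_le hab.le,
    intervalIntegral.integral_congr fun t ht => abs_of_nonpos (hnonpos t ht),
    intervalIntegral.integral_neg,
    intervalIntegral.integral_eq_sub_of_hasDerivAt hderiv hcont.intervalIntegrable, neg_sub]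

theorem abs_intervalIntegral_mul_comp_sub_le (v c : ℝ → ℝ) (x : ℝ) {η : ℝ} (hη : 0 ≤ η) :
    |∫ z in x..x + η, v z * c (z - x)| ≤ ∫ t in Ioc 0 η, |v (x + t)| * |c t| :=
  calc |∫ z in x..x + η, v z * c (z - x)|
      ≤ ∫ z in x..x + η, |v z * c (z - x)| :=
        intervalIntegral.abs_integral_le_integral_abs (by linarith)
    _ = ∫ t in Ioc 0 η, |v (x + t)| * |c t| := by
        have hshift := intervalIntegral.integral_comp_add_left (a := 0) (b := η)
          (fun z => |v z * c (z - x)|) x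
        rw [add_zero] at hshift
        rw [← hshift, intervalIntegral.integral_of_le hη]
        simp only [add_sub_cancel_left, abs_mul]

theorem abs_average_deriv_le (v ω ω' : ℝ → ℝ) (x : ℝ) {η M : ℝ} (hη : 0 ≤ η)
    (hω0 : |ω 0| ≤ M) (hωη : |ω η| ≤ M) :
    |(∫ z in x..(x + η), v z * ω' (z - x)) + v (x + η) * ω η - v x * ω 0| ≤
      (∫ t in Ioc 0 η, |v (x + t)| * |ω' t|) + |v (x + η)| * M + |v x| * M := by
  have hright : |v (x + η) * ω η| ≤ |v (x + η)| * M := by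
    rw [abs_mul]; exact mul_le_mul_of_nonneg_left hωη (abs_nonneg _)
  have hleft : |v x * ω 0| ≤ |v x| * M := by
    rw [abs_mul]; exact mul_le_mul_of_nonneg_left hω0 (abs_nonneg _)
  linarith [abs_intervalIntegral_mul_comp_sub_le v ω' x hη,
    abs_sub ((∫ z in x..(x + η), v z * ω' (z - x)) + v (x + η) * ω η) (v x * ω 0),
    abs_add_le (∫ z in x..(x + η), v z * ω' (z - x)) (v (x + η) * ω η)]

section Majorant

variable {v g : ℝ → ℝ} {η M : ℝ}

theorem integrable_majorant (hvm : Measurable v) (hv : Integrable v)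
    (hg : IntegrableOn g (Ioc 0 η)) :
    Integrable fun x => (∫ t in Ioc 0 η, |v (x + t)| * |g t|) + |v (x + η)| * M + |v x| * M :=
  (((integrable_prod_comp_add_mul hvm.abs hv.abs hg.abs).integral_prod_left).add
    ((hv.comp_add_right η).abs.mul_const M)).add (hv.abs.mul_const M)

theorem integral_majorant (hvm : Measurable v) (hv : Integrable v)
    (hg : IntegrableOn g (Ioc 0 η)) :
    ∫ x, (∫ t in Ioc 0 η, |v (x + t)| * |g t|) + |v (x + η)| * M + |v x| * M =
      (∫ z, |v z|) * (∫ t in Ioc 0 η, |g t|) + (∫ z, |v z|) * M + (∫ z, |v z|) * M := by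
  have hconv : Integrable fun x => ∫ t in Ioc 0 η, |v (x + t)| * |g t| :=
    (integrable_prod_comp_add_mul hvm.abs hv.abs hg.abs).integral_prod_left
  have hshift : Integrable fun x => |v (x + η)| * M := (hv.comp_add_right η).abs.mul_const M
  have hfirst : Integrable fun x =>
      (∫ t in Ioc 0 η, |v (x + t)| * |g t|) + |v (x + η)| * M := hconv.add hshift
  rw [integral_add hfirst (hv.abs.mul_const M), integral_add hconv hshift,
    integral_integral_comp_add_mul hvm.abs hv.abs hg.abs, integral_mul_const,
    integral_mul_const, integral_add_right_eq_self fun z => |v z|]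

end Majorant

theorem conv_deriv_L1_bound_general (η Mω : ℝ) (hη : 0 < η) (ω ω' v : ℝ → ℝ)
    (hω_deriv : ∀ t ∈ Set.Icc 0 η, HasDerivAt ω (ω' t) t)
    (hω'_cont : ContinuousOn ω' (Set.Icc 0 η))
    (hω_nonneg : ∀ t ∈ Set.Icc 0 η, 0 ≤ ω t)
    (hω_mono : ∀ s ∈ Set.Icc 0 η, ∀ t ∈ Set.Icc 0 η, s ≤ t → ω t ≤ ω s)
    (hv_cont : Continuous v) (hv_int : Integrable v)
    (hω_bdd : ∀ t ∈ Set.Icc 0 η, |ω t| ≤ Mω) :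
    (∫ x, |(∫ z in x..(x + η), v z * ω' (z - x)) + v (x + η) * ω η - v x * ω 0|) ≤
      3 * (∫ z, |v z|) * Mω := by
  have h0 : (0 : ℝ) ∈ Icc 0 η := left_mem_Icc.2 hη.le
  have hη' : η ∈ Icc 0 η := right_mem_Icc.2 hη.le
  have hvar : ∫ t in Ioc 0 η, |ω' t| ≤ Mω := by
    rw [AntitoneOn.integral_Ioc_abs_deriv hη hω_mono hω_deriv hω'_cont]
    linarith [le_of_abs_le (hω_bdd 0 h0), hω_nonneg η hη']
  have hω'_int : IntegrableOn ω' (Ioc 0 η) :=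
    hω'_cont.integrableOn_Icc.mono_set Ioc_subset_Icc_self
  have hI : 0 ≤ ∫ z, |v z| := integral_nonneg fun z => abs_nonneg _
  calc _ ≤ ∫ x, (∫ t in Ioc 0 η, |v (x + t)| * |ω' t|) + |v (x + η)| * Mω + |v x| * Mω :=
        integral_mono_of_nonneg (.of_forall fun x => abs_nonneg _)
          (integrable_majorant hv_cont.measurable hv_int hω'_int)
          (.of_forall fun x => abs_average_deriv_le v ω ω' x hη.le (hω_bdd 0 h0) (hω_bdd η hη'))
    _ = (∫ z, |v z|) * (∫ t in Ioc 0 η, |ω' t|) + (∫ z, |v z|) * Mω + (∫ z, |v z|) * Mω :=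
        integral_majorant hv_cont.measurable hv_int hω'_int
    _ ≤ 3 * (∫ z, |v z|) * Mω := by nlinarith

/-- The derivative of the one-sided nonlocal average has `L¹` norm at most
`3 ‖v‖_{L¹} ‖ω‖_{L^∞}`; hence the nonlocal average has bounded variation. -/
theorem conv_deriv_L1_bound (η Mω : ℝ) (hη : 0 < η) (ω ω' v : ℝ → ℝ)
    (hω_deriv : ∀ t ∈ Set.Icc 0 η, HasDerivAt ω (ω' t) t)
    (hω'_cont : ContinuousOn ω' (Set.Icc 0 η))
    (hω_nonneg : ∀ t ∈ Set.Icc 0 η, 0 ≤ ω t)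
    (hω_mono : ∀ s ∈ Set.Icc 0 η, ∀ t ∈ Set.Icc 0 η, s ≤ t → ω t ≤ ω s)
    (hv_cont : Continuous v) (hv_int : Integrable v)
    (hv_bdd : ∃ Mv, ∀ x, |v x| ≤ Mv)
    (hω_bdd : ∀ t ∈ Set.Icc 0 η, |ω t| ≤ Mω) :
    (∫ x, |(∫ z in x..(x + η), v z * ω' (z - x)) + v (x + η) * ω η - v x * ω 0|) ≤
      3 * (∫ z, |v z|) * Mω :=
  conv_deriv_L1_bound_general η Mω hη ω ω' v hω_deriv hω'_cont hω_nonneg hω_mono hv_cont hv_int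
    hω_bdd
end

section
/- Let ω : [0, η] → ℝ be nonnegative and nonincreasing, extended by zero outside [0, η]. For a space step Δx with η = N_η Δx, define ζ_{p+1/2} = ∫_{pΔx}^{(p+1)Δx} ω(y) dy for p = 0, ..., N_η - 1, and given a sequence (u_i) with 0 ≤ u_i ≤ 1, define c_{i+1/2} = Σ_{p=0}^{N_η-1} ζ_{p+1/2} u_{i+p+1}. Then for every i, |c_{i+1/2} - c_{i-1/2}| ≤ ζ_{1/2} ≤ ω(0) Δx. -/
/-!
Subtracting the two averages gives `c_{i+1/2} - c_{i-1/2} = ∑ ζ_p (u_{i+p+1} - u_{i+p})`.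
Abel summation rewrites this as `ζ_{N-1} (v_N - v_0) + ∑ (ζ_p - ζ_{p+1}) (v_{p+1} - v_0)` with
`v_k = u_{i+k}`; all weights are nonnegative because `ω` is nonincreasing (so are its cell
integrals `ζ_p`), they telescope to `ζ_0`, and every `|v_k - v_0| ≤ 1`.
-/

open MeasureTheory Set Finset

theorem abs_sum_range_mul_sub_le_of_antitone {N : ℕ} {ζ v : ℕ → ℝ} {M : ℝ}
    (hζ_nonneg : 0 ≤ ζ (N - 1)) (hζ_anti : ∀ p, p + 1 < N → ζ (p + 1) ≤ ζ p)
    (hv : ∀ k ≤ N, |v k - v 0| ≤ M) :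
    |∑ p ∈ range N, ζ p * (v (p + 1) - v p)| ≤ ζ 0 * M := by
  have abel : ∑ p ∈ range N, ζ p * (v (p + 1) - v p) =
      ζ (N - 1) * (v N - v 0) + ∑ p ∈ range (N - 1), (ζ p - ζ (p + 1)) * (v (p + 1) - v 0) := by
    have := sum_range_by_parts ζ (fun p ↦ v (p + 1) - v p) N
    simp only [smul_eq_mul, sum_range_sub] at this
    rw [this, sub_eq_add_neg, ← sum_neg_distrib]
    congr 1
    exact sum_congr rfl fun p _ ↦ by ring
  calc |∑ p ∈ range N, ζ p * (v (p + 1) - v p)|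
      ≤ ζ (N - 1) * M + ∑ p ∈ range (N - 1), (ζ p - ζ (p + 1)) * M := by
        rw [abel]
        refine (abs_add_le _ _).trans (add_le_add ?_ ((abs_sum_le_sum_abs _ _).trans ?_))
        · rw [abs_mul, abs_of_nonneg hζ_nonneg]
          exact mul_le_mul_of_nonneg_left (hv N le_rfl) hζ_nonneg
        · refine sum_le_sum fun p hp ↦ ?_
          have hp : p + 1 < N := by rw [Finset.mem_range] at hp; omega
          rw [abs_mul, abs_of_nonneg (sub_nonneg.2 (hζ_anti p hp))]
          exact mul_le_mul_of_nonneg_left (hv (p + 1) hp.le) (sub_nonneg.2 (hζ_anti p hp))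
    _ = ζ 0 * M := by rw [← sum_mul, sum_range_sub']; ring

namespace AntitoneOn

variable {f : ℝ → ℝ} {a b : ℝ}

theorem intervalIntegrable_of_le (hab : a ≤ b) (hf : AntitoneOn f (Icc a b)) :
    IntervalIntegrable f volume a b :=
  AntitoneOn.intervalIntegrable (by rwa [uIcc_of_le hab])

theorem intervalIntegral_le_mul_sub (hab : a ≤ b) (hf : AntitoneOn f (Icc a b)) :
    ∫ x in a..b, f x ≤ f a * (b - a) :=
  calc ∫ x in a..b, f x
      ≤ ∫ _ in a..b, f a :=
        intervalIntegral.integral_mono_on hab (hf.intervalIntegrable_of_le hab)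
          intervalIntegrable_const fun x hx ↦ hf (left_mem_Icc.2 hab) hx hx.1
    _ = f a * (b - a) := by rw [intervalIntegral.integral_const, smul_eq_mul, mul_comm]

theorem intervalIntegral_add_le {h : ℝ} (hab : a ≤ b) (hh : 0 ≤ h)
    (hf : AntitoneOn f (Icc a (b + h))) :
    ∫ x in (a + h)..(b + h), f x ≤ ∫ x in a..b, f x := by
  have hf_shift : AntitoneOn (fun x ↦ f (x + h)) (Icc a b) := fun x hx y hy hxy ↦
    hf ⟨by linarith [hx.1], by linarith [hx.2]⟩ ⟨by linarith [hy.1], by linarith [hy.2]⟩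
      (by linarith)
  have hf_base : AntitoneOn f (Icc a b) := hf.mono (Icc_subset_Icc_right (by linarith))
  rw [← intervalIntegral.integral_comp_add_right]
  exact intervalIntegral.integral_mono_on hab (hf_shift.intervalIntegrable_of_le hab)
    (hf_base.intervalIntegrable_of_le hab) fun x hx ↦
      hf ⟨hx.1, by linarith [hx.2]⟩ ⟨by linarith [hx.1], by linarith [hx.2]⟩ (by linarith)

end AntitoneOn

/-- The paper's `ζ_{p+1/2}` for the mesh `h`. -/
noncomputable def cellIntegral (f : ℝ → ℝ) (h : ℝ) (p : ℕ) : ℝ :=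
  ∫ x in (p * h)..((p + 1) * h), f x

section cellIntegral

variable {f : ℝ → ℝ} {h : ℝ} {N p : ℕ}

theorem cellIntegral_nonneg (hh : 0 ≤ h) (hp : p < N) (hf : ∀ x ∈ Icc 0 (N * h), 0 ≤ f x) :
    0 ≤ cellIntegral f h p := by
  have hp' : (p : ℝ) + 1 ≤ N := by exact_mod_cast hp
  refine intervalIntegral.integral_nonneg (by nlinarith) fun x hx ↦ hf x ⟨?_, ?_⟩
  · nlinarith [hx.1]
  · nlinarith [hx.2]

theorem cellIntegral_succ_le (hh : 0 ≤ h) (hp : p + 1 < N) (hf : AntitoneOn f (Icc 0 (N * h))) :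
    cellIntegral f h (p + 1) ≤ cellIntegral f h p := by
  have hp' : (p : ℝ) + 2 ≤ N := by exact_mod_cast hp
  have hshift := (hf.mono (Icc_subset_Icc (a₁ := p * h) (b₁ := (p + 1) * h + h)
    (by positivity) (by nlinarith))).intervalIntegral_add_le (by nlinarith) hh
  simp only [cellIntegral]
  convert hshift using 2 <;> push_cast <;> ring

theorem cellIntegral_zero_le (hh : 0 ≤ h) (hf : AntitoneOn f (Icc 0 h)) :
    cellIntegral f h 0 ≤ f 0 * h := by
  simpa [cellIntegral] using hf.intervalIntegral_le_mul_sub hh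

end cellIntegral

/-- Discrete nonlocal averages: `|c_{i+1/2} - c_{i-1/2}| ≤ ζ_{1/2} ≤ ω(0) Δx`. -/
theorem discrete_average_diff_bound (η Δx : ℝ) (Nη : ℕ) (hNη : 0 < Nη) (hη : 0 < η)
    (hΔx : Δx = η / Nη)
    (ω : ℝ → ℝ) (hω_nonneg : ∀ t ∈ Set.Icc 0 η, 0 ≤ ω t)
    (hω_mono : ∀ s ∈ Set.Icc 0 η, ∀ t ∈ Set.Icc 0 η, s ≤ t → ω t ≤ ω s)
    (u : ℤ → ℝ) (hu : ∀ i, u i ∈ Set.Icc (0 : ℝ) 1)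
    (ζ : ℕ → ℝ) (hζ : ∀ p, ζ p = ∫ y in ((p : ℝ) * Δx)..(((p : ℝ) + 1) * Δx), ω y)
    (c : ℤ → ℝ) (hc : ∀ i, c i = ∑ p ∈ Finset.range Nη, ζ p * u (i + (p : ℤ) + 1)) :
    ∀ i : ℤ, |c i - c (i - 1)| ≤ ζ 0 ∧ ζ 0 ≤ ω 0 * Δx := by
  obtain rfl : ζ = cellIntegral ω Δx := funext hζ
  have hΔ : 0 ≤ Δx := by rw [hΔx]; positivity
  have hNΔ : (Nη : ℝ) * Δx = η := by rw [hΔx]; field_simp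
  have hΔη : Δx ≤ Nη * Δx := le_mul_of_one_le_left hΔ (Nat.one_le_cast.2 hNη)
  have hω : AntitoneOn ω (Icc 0 (Nη * Δx)) := hNΔ ▸ fun s hs t ht hst ↦ hω_mono s hs t ht hst
  intro i
  refine ⟨?_, cellIntegral_zero_le hΔ (hω.mono (Icc_subset_Icc_right hΔη))⟩
  have hdiff : c i - c (i - 1) =
      ∑ p ∈ range Nη, cellIntegral ω Δx p * (u (i + (p + 1 : ℕ)) - u (i + p)) := by
    rw [hc, hc, ← sum_sub_distrib]
    exact sum_congr rfl fun p _ ↦ by push_cast; ring_nf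
  rw [hdiff, ← mul_one (cellIntegral ω Δx 0)]
  exact abs_sum_range_mul_sub_le_of_antitone (v := fun k ↦ u (i + k))
    (cellIntegral_nonneg hΔ (Nat.sub_one_lt hNη.ne') (hNΔ ▸ hω_nonneg))
    (fun p hp ↦ cellIntegral_succ_le hΔ hp hω)
    fun k _ ↦ abs_sub_le_of_nonneg_of_le (hu _).1 (hu _).2 (hu _).1 (hu _).2
end

section
/- With the notation of the discrete nonlocal averages (ζ_{p+1/2}, c_{i+1/2} as above), if additionally Σ_i |u_{i+1} - u_i| < ∞, then Σ_{i ∈ ℤ} |c_{i-1/2} - 2 c_{i+1/2} + c_{i+3/2}| ≤ 2 ζ_{1/2} Σ_{i ∈ ℤ} |u_{i+1} - u_i| ≤ 2 ω(0) Δx Σ_{i ∈ ℤ} |u_{i+1} - u_i|. -/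
/-!
Summation by parts writes the second difference of `c` as a combination of shifted first
differences of `u` with coefficients `-ζ 0`, `ζ p - ζ (p + 1)` and `ζ (Nη - 1)`. As `ω` is
nonnegative and nonincreasing, so is `ζ`, hence these coefficients have total absolute value
`2 ζ 0`, and shift invariance of `∑' i, |u (i + 1) - u i|` gives the first bound. The second is
`ζ 0 = ∫₀^Δx ω ≤ ω 0 Δx`.
-/

open MeasureTheory Finset

section SummationByParts

theorem sum_range_succ_mul_sub_eq (w x : ℕ → ℝ) (m : ℕ) :
    ∑ p ∈ range (m + 1), w p * (x (p + 1) - x p) =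
      -(w 0 * x 0) + ∑ p ∈ range m, (w p - w (p + 1)) * x (p + 1) + w m * x (m + 1) := by
  induction m with
  | zero => simp only [zero_add, sum_range_one, range_zero, sum_empty]; ring
  | succ m ih => rw [sum_range_succ, ih, sum_range_succ]; ring

variable {w : ℕ → ℝ} {m : ℕ}

theorem abs_sum_range_succ_mul_sub_le (x : ℕ → ℝ) (hw : ∀ p < m, w (p + 1) ≤ w p)
    (hwm : 0 ≤ w m) :
    |∑ p ∈ range (m + 1), w p * (x (p + 1) - x p)| ≤
      w 0 * |x 0| + ∑ p ∈ range m, (w p - w (p + 1)) * |x (p + 1)| + w m * |x (m + 1)| := by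
  have hw0 : 0 ≤ w 0 := by
    have : 0 ≤ ∑ p ∈ range m, (w p - w (p + 1)) :=
      sum_nonneg fun p hp => sub_nonneg.mpr (hw p (mem_range.mp hp))
    linarith [sum_range_sub' w m]
  have hsum : |∑ p ∈ range m, (w p - w (p + 1)) * x (p + 1)| ≤
      ∑ p ∈ range m, (w p - w (p + 1)) * |x (p + 1)| := by
    refine (abs_sum_le_sum_abs _ _).trans_eq (sum_congr rfl fun p hp => ?_)
    rw [abs_mul, abs_of_nonneg (sub_nonneg.mpr (hw p (mem_range.mp hp)))]
  rw [sum_range_succ_mul_sub_eq]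
  calc _ ≤ |-(w 0 * x 0)| + |∑ p ∈ range m, (w p - w (p + 1)) * x (p + 1)| + |w m * x (m + 1)| :=
        abs_add_three _ _ _
    _ ≤ _ := by
        rw [abs_neg, abs_mul, abs_mul, abs_of_nonneg hw0, abs_of_nonneg hwm]
        gcongr

theorem tsum_abs_sum_range_mul_sub_shift_le {d : ℤ → ℝ} (hd : Summable fun i => |d i|)
    (hw : ∀ p < m, w (p + 1) ≤ w p) (hwm : 0 ≤ w m) :
    ∑' i, |∑ p ∈ range (m + 1), w p * (d (i + p + 1) - d (i + p))| ≤
      2 * w 0 * ∑' i, |d i| := by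
  set T := ∑' i, |d i|
  have hshift (k : ℤ) (a : ℝ) : HasSum (fun i => a * |d (i + k)|) (a * T) :=
    ((Equiv.addRight k).hasSum_iff.mpr hd.hasSum).mul_left a
  have hpt (i : ℤ) := abs_sum_range_succ_mul_sub_le (fun p : ℕ => d (i + p)) hw hwm
  push_cast at hpt
  simp only [add_zero, ← add_assoc] at hpt
  have hmaj : HasSum (fun i => w 0 * |d i| + ∑ p ∈ range m, (w p - w (p + 1)) * |d (i + p + 1)|
      + w m * |d (i + m + 1)|) (w 0 * T + ∑ p ∈ range m, (w p - w (p + 1)) * T + w m * T) := by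
    have h0 : HasSum (fun i => w 0 * |d i|) (w 0 * T) := by simpa using hshift 0 (w 0)
    refine (h0.add (hasSum_sum fun p _ => ?_)).add ?_
    · simpa only [add_assoc] using hshift (p + 1) (w p - w (p + 1))
    · simpa only [add_assoc] using hshift (m + 1) (w m)
  have hsumm := hmaj.summable.of_nonneg_of_le (fun i => abs_nonneg _) hpt
  refine (hasSum_le hpt hsumm.hasSum hmaj).trans_eq ?_
  rw [← sum_mul, sum_range_sub']
  ring

end SummationByParts

section AntitoneIntegral

variable {ω : ℝ → ℝ} {a b : ℝ}

theorem integral_comp_add_le_of_antitoneOn {h : ℝ} (hab : a ≤ b) (hh : 0 ≤ h)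
    (hω : AntitoneOn ω (Set.Icc a (b + h))) :
    ∫ x in (a + h)..(b + h), ω x ≤ ∫ x in a..b, ω x := by
  rw [← intervalIntegral.integral_comp_add_right]
  have hmem {x : ℝ} (hx : x ∈ Set.Icc a b) : x ∈ Set.Icc a (b + h) := ⟨hx.1, by linarith [hx.2]⟩
  have hmem' {x : ℝ} (hx : x ∈ Set.Icc a b) : x + h ∈ Set.Icc a (b + h) :=
    ⟨by linarith [hx.1], by linarith [hx.2]⟩
  refine intervalIntegral.integral_mono_on hab ?_ ?_
    fun x hx => hω (hmem hx) (hmem' hx) (by linarith)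
  · refine AntitoneOn.intervalIntegrable ?_
    rw [Set.uIcc_of_le hab]
    exact fun x hx y hy hxy => hω (hmem' hx) (hmem' hy) (by linarith)
  · refine AntitoneOn.intervalIntegrable ?_
    rw [Set.uIcc_of_le hab]
    exact fun x hx y hy hxy => hω (hmem hx) (hmem hy) hxy

theorem integral_le_mul_of_antitoneOn (hab : a ≤ b) (hω : AntitoneOn ω (Set.Icc a b)) :
    ∫ x in a..b, ω x ≤ ω a * (b - a) := by
  have hint : IntervalIntegrable ω volume a b := by
    refine AntitoneOn.intervalIntegrable ?_
    rwa [Set.uIcc_of_le hab]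
  calc ∫ x in a..b, ω x ≤ ∫ _ in a..b, ω a :=
        intervalIntegral.integral_mono_on hab hint intervalIntegrable_const
          fun x hx => hω ⟨le_rfl, hab⟩ hx hx.1
    _ = ω a * (b - a) := by simp [mul_comm]

end AntitoneIntegral

theorem sub_two_mul_add_eq_sum_mul_sub {c u : ℤ → ℝ} {ζ : ℕ → ℝ} {n : ℕ}
    (hc : ∀ i, c i = ∑ p ∈ range n, ζ p * u (i + p + 1)) (i : ℤ) :
    c (i - 1) - 2 * c i + c (i + 1) = ∑ p ∈ range n,
      ζ p * ((u (i + p + 1 + 1) - u (i + p + 1)) - (u (i + p + 1) - u (i + p))) := by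
  simp only [hc, mul_sum, ← sum_sub_distrib, ← sum_add_distrib]
  refine sum_congr rfl fun p _ => ?_
  rw [show i - 1 + p + 1 = i + p by ring, show i + 1 + p + 1 = i + p + 1 + 1 by ring]
  ring

theorem discrete_second_difference_bound_general (η Δx : ℝ) (Nη : ℕ) (hNη : 0 < Nη) (hη : 0 < η)
    (hΔx : Δx = η / Nη)
    (ω : ℝ → ℝ) (hω_nonneg : ∀ t ∈ Set.Icc 0 η, 0 ≤ ω t)
    (hω_mono : ∀ s ∈ Set.Icc 0 η, ∀ t ∈ Set.Icc 0 η, s ≤ t → ω t ≤ ω s)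
    (u : ℤ → ℝ)
    (hTV : Summable (fun i : ℤ => |u (i + 1) - u i|))
    (ζ : ℕ → ℝ) (hζ : ∀ p, ζ p = ∫ y in ((p : ℝ) * Δx)..(((p : ℝ) + 1) * Δx), ω y)
    (c : ℤ → ℝ) (hc : ∀ i, c i = ∑ p ∈ Finset.range Nη, ζ p * u (i + (p : ℤ) + 1)) :
    (∑' i : ℤ, |c (i - 1) - 2 * c i + c (i + 1)|) ≤
        2 * ζ 0 * ∑' i : ℤ, |u (i + 1) - u i| ∧
    2 * ζ 0 * (∑' i : ℤ, |u (i + 1) - u i|) ≤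
        2 * ω 0 * Δx * ∑' i : ℤ, |u (i + 1) - u i| := by
  obtain ⟨m, rfl⟩ := Nat.exists_eq_add_one_of_ne_zero hNη.ne'
  have hΔx_pos : 0 < Δx := by rw [hΔx]; positivity
  have hη_eq : η = (m + 1) * Δx := by rw [hΔx]; push_cast; field_simp
  have hω {s t : ℝ} (hs : 0 ≤ s) (ht : t ≤ η) : AntitoneOn ω (Set.Icc s t) :=
    AntitoneOn.mono hω_mono (Set.Icc_subset_Icc hs ht)
  have hζ_step (p : ℕ) (hp : p < m) : ζ (p + 1) ≤ ζ p := by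
    have hp' : (p : ℝ) + 1 ≤ m := by exact_mod_cast hp
    rw [hζ, hζ]
    convert integral_comp_add_le_of_antitoneOn (a := p * Δx) (b := (p + 1) * Δx)
      (by nlinarith) hΔx_pos.le (hω (by positivity) (by nlinarith)) using 2 <;> push_cast <;> ring
  have hζ_last : 0 ≤ ζ m := by
    rw [hζ]
    exact intervalIntegral.integral_nonneg (by nlinarith) fun y hy =>
      hω_nonneg y ⟨by nlinarith [hy.1], by nlinarith [hy.2]⟩
  have hζ_zero : ζ 0 ≤ ω 0 * Δx := by
    have h := integral_le_mul_of_antitoneOn hΔx_pos.le (hω le_rfl (by nlinarith))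
    rw [hζ]
    simpa using h
  refine ⟨?_, ?_⟩
  · simp only [sub_two_mul_add_eq_sum_mul_sub hc]
    exact tsum_abs_sum_range_mul_sub_shift_le hTV hζ_step hζ_last
  · rw [mul_assoc 2 (ω 0)]
    gcongr

/-- Second differences of the discrete nonlocal averages are controlled by the
discrete total variation of `u`:
`Σ_i |c_{i-1/2} - 2 c_{i+1/2} + c_{i+3/2}| ≤ 2 ζ_{1/2} Σ_i |u_{i+1}-u_i| ≤ 2 ω(0) Δx Σ_i |u_{i+1}-u_i|`. -/
theorem discrete_second_difference_bound (η Δx : ℝ) (Nη : ℕ) (hNη : 0 < Nη) (hη : 0 < η)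
    (hΔx : Δx = η / Nη)
    (ω : ℝ → ℝ) (hω_nonneg : ∀ t ∈ Set.Icc 0 η, 0 ≤ ω t)
    (hω_mono : ∀ s ∈ Set.Icc 0 η, ∀ t ∈ Set.Icc 0 η, s ≤ t → ω t ≤ ω s)
    (u : ℤ → ℝ) (hu : ∀ i, u i ∈ Set.Icc (0 : ℝ) 1)
    (hTV : Summable (fun i : ℤ => |u (i + 1) - u i|))
    (ζ : ℕ → ℝ) (hζ : ∀ p, ζ p = ∫ y in ((p : ℝ) * Δx)..(((p : ℝ) + 1) * Δx), ω y)
    (c : ℤ → ℝ) (hc : ∀ i, c i = ∑ p ∈ Finset.range Nη, ζ p * u (i + (p : ℤ) + 1)) :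
    (∑' i : ℤ, |c (i - 1) - 2 * c i + c (i + 1)|) ≤
        2 * ζ 0 * ∑' i : ℤ, |u (i + 1) - u i| ∧
    2 * ζ 0 * (∑' i : ℤ, |u (i + 1) - u i|) ≤
        2 * ω 0 * Δx * ∑' i : ℤ, |u (i + 1) - u i| :=
  discrete_second_difference_bound_general η Δx Nη hNη hη hΔx ω hω_nonneg hω_mono u hTV ζ hζ c hc
end

section
/- Let g, h : ℝ → ℝ with g differentiable, g nonincreasing (Dg ≤ 0), and let ν, μ ≥ 0 be constants. Define S(a, b) = (h(b)μ - g(a)ν)^+ · a - (h(b)μ - g(a)ν)^- · b for a, b ≥ 0, where x^+ = max(x,0) and x^- = -min(x,0). Then S is nondecreasing in a on [0, ∞): the partial derivative with respect to a (wherever M = h(b)μ - g(a)ν ≠ 0) equals -a Dg(a) ν ≥ 0 when M > 0, and the corresponding derivative when M < 0 is also nonnegative. -/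
theorem max_zero_mul_add_min_zero_mul_le {R : Type*} [Semiring R] [LinearOrder R]
    [IsOrderedRing R] {x y a₁ a₂ b : R} (hxy : x ≤ y) (ha₁ : 0 ≤ a₁) (ha : a₁ ≤ a₂)
    (hb : 0 ≤ b) :
    max x 0 * a₁ + min x 0 * b ≤ max y 0 * a₂ + min y 0 * b :=
  add_le_add (mul_le_mul (max_le_max_right 0 hxy) ha ha₁ (le_max_right y 0))
    (mul_le_mul_of_nonneg_right (min_le_min_right 0 hxy) hb)

theorem source_monotone_first_general (g h : ℝ → ℝ) (hga : Antitone g)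
    (ν μ : ℝ) (hν : 0 ≤ ν) :
    ∀ b, 0 ≤ b → ∀ a₁ a₂, 0 ≤ a₁ → a₁ ≤ a₂ →
      max (h b * μ - g a₁ * ν) 0 * a₁ + min (h b * μ - g a₁ * ν) 0 * b ≤
      max (h b * μ - g a₂ * ν) 0 * a₂ + min (h b * μ - g a₂ * ν) 0 * b := by
  intro b hb a₁ a₂ ha₁ ha
  have hM : h b * μ - g a₁ * ν ≤ h b * μ - g a₂ * ν :=
    sub_le_sub_left (mul_le_mul_of_nonneg_right (hga ha) hν) _
  exact max_zero_mul_add_min_zero_mul_le hM ha₁ ha hb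

/-- The lane-change source term
`S(a,b) = (h(b)μ - g(a)ν)⁺ a - (h(b)μ - g(a)ν)⁻ b` is nondecreasing in `a` on `[0,∞)`. -/
theorem source_monotone_first (g h : ℝ → ℝ) (hg : Differentiable ℝ g) (hga : Antitone g)
    (hh : Differentiable ℝ h) (hha : Antitone h)
    (ν μ : ℝ) (hν : 0 ≤ ν) (hμ : 0 ≤ μ) :
    ∀ b, 0 ≤ b → ∀ a₁ a₂, 0 ≤ a₁ → a₁ ≤ a₂ →
      max (h b * μ - g a₁ * ν) 0 * a₁ + min (h b * μ - g a₁ * ν) 0 * b ≤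
      max (h b * μ - g a₂ * ν) 0 * a₂ + min (h b * μ - g a₂ * ν) 0 * b :=
  source_monotone_first_general g h hga ν μ hν
end

section
/- Let g, h : ℝ → ℝ be differentiable and nonincreasing, ν, μ ≥ 0 constants, and define S(a, b) = (h(b)μ - g(a)ν)^+ a + (h(b)μ - g(a)ν)^- b with x^- = min(x, 0). Then for a, b ∈ [0, 1], S is nonincreasing in b. -/
/-! With `x(b) = h(b)μ - g(a)ν`, which is nonincreasing in `b`, the source term is
`φ_b(x(b))` for `φ_b(x) = x⁺a + x⁻b`; `φ_b` is nondecreasing in `x` (as `a, b ≥ 0`) and,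
since `x⁻ ≤ 0`, nonincreasing in `b`. -/

section LaneChange

variable {α : Type*} [Ring α] [LinearOrder α] [IsOrderedRing α]

theorem monotone_max_zero_mul_add_min_zero_mul {a b : α} (ha : 0 ≤ a) (hb : 0 ≤ b) :
    Monotone fun x : α => max x 0 * a + min x 0 * b :=
  ((monotone_id.max monotone_const).mul_const ha).add
    ((monotone_id.min monotone_const).mul_const hb)

theorem max_zero_mul_add_min_zero_mul_le_s9 {x₁ x₂ a b₁ b₂ : α} (hx : x₂ ≤ x₁) (ha : 0 ≤ a)
    (hb₁ : 0 ≤ b₁) (hb : b₁ ≤ b₂) :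
    max x₂ 0 * a + min x₂ 0 * b₂ ≤ max x₁ 0 * a + min x₁ 0 * b₁ :=
  calc max x₂ 0 * a + min x₂ 0 * b₂
      ≤ max x₂ 0 * a + min x₂ 0 * b₁ :=
        add_le_add_right (mul_le_mul_of_nonpos_left hb (min_le_right _ _)) _
    _ ≤ max x₁ 0 * a + min x₁ 0 * b₁ := monotone_max_zero_mul_add_min_zero_mul ha hb₁ hx

end LaneChange

theorem source_antitone_second_general (g h : ℝ → ℝ) (hha : Antitone h)
    (ν μ : ℝ) (hμ : 0 ≤ μ) :
    ∀ a ∈ Set.Icc (0 : ℝ) 1, ∀ b₁ ∈ Set.Icc (0 : ℝ) 1, ∀ b₂ ∈ Set.Icc (0 : ℝ) 1,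
      b₁ ≤ b₂ →
      max (h b₂ * μ - g a * ν) 0 * a + min (h b₂ * μ - g a * ν) 0 * b₂ ≤
      max (h b₁ * μ - g a * ν) 0 * a + min (h b₁ * μ - g a * ν) 0 * b₁ := by
  rintro a ⟨ha, -⟩ b₁ ⟨hb₁, -⟩ b₂ - hb
  have hflux : h b₂ * μ - g a * ν ≤ h b₁ * μ - g a * ν := by
    gcongr
    exact hha hb
  exact max_zero_mul_add_min_zero_mul_le_s9 hflux ha hb₁ hb

/-- The lane-change source term
`S(a,b) = (h(b)μ - g(a)ν)⁺ a + (h(b)μ - g(a)ν)⁻ b` (with `x⁻ = min(x,0)`)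
is nonincreasing in `b` for `a, b ∈ [0,1]`. -/
theorem source_antitone_second (g h : ℝ → ℝ) (hg : Differentiable ℝ g) (hga : Antitone g)
    (hh : Differentiable ℝ h) (hha : Antitone h)
    (ν μ : ℝ) (hν : 0 ≤ ν) (hμ : 0 ≤ μ) :
    ∀ a ∈ Set.Icc (0 : ℝ) 1, ∀ b₁ ∈ Set.Icc (0 : ℝ) 1, ∀ b₂ ∈ Set.Icc (0 : ℝ) 1,
      b₁ ≤ b₂ →
      max (h b₂ * μ - g a * ν) 0 * a + min (h b₂ * μ - g a * ν) 0 * b₂ ≤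
      max (h b₁ * μ - g a * ν) 0 * a + min (h b₁ * μ - g a * ν) 0 * b₁ :=
  source_antitone_second_general g h hha ν μ hμ
end
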